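/- Let c₁ ≥ c₂ ≥ 0 and c₃ be real numbers with c₃ ≠ 0 or c₂ > 0. Then the fibre F⁻¹(c₁, c₂, c₃) is a connected subset of ℂ³. -/

import Mathlib

open Complex

/-- The Harvey–Lawson fibration `F : ℂ³ → ℝ³`. -/
noncomputable def HLfib (z : ℂ × ℂ × ℂ) : ℝ × ℝ × ℝ :=
  (normSq z.1 - normSq z.2.2, normSq z.2.1 - normSq z.2.2, (z.1 * z.2.1 * z.2.2).im)

/-!
On the fibre `|z₁|² = c₁ + u` and `|z₂|² = c₂ + u` with `u = |z₃|²`, while `w = z₁ z₂ z₃` lies on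
the line `Im w = c₃`. Conversely `u` is determined by `|w|² = u (c₁ + u) (c₂ + u)`, whose right
side is an increasing self-homeomorphism of `[0, ∞)`. The hypotheses force `z₁ z₂ ≠ 0`, so the
fibre is the continuous image of `ℝ³` under `(Re w, α, β) ↦ (z₁, z₂, w / (z₁ z₂))` with
`z₁ = √(c₁ + u) e^{iα}` and `z₂ = √(c₂ + u) e^{iβ}`.
-/

open Set Filter

theorem StrictMonoOn.exists_continuous_rightInverse_Ici {f : ℝ → ℝ} {a : ℝ}
    (hmono : StrictMonoOn f (Ici a)) (hcont : ContinuousOn f (Ici a))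
    (htop : Tendsto f atTop atTop) :
    ∃ g : ℝ → ℝ, Continuous g ∧ ∀ y, f a ≤ y → a ≤ g y ∧ f (g y) = y := by
  let φ : Ici a → Ici (f a) := fun x => ⟨f x, hmono.monotoneOn self_mem_Ici x.2 x.2⟩
  have hφ_mono : StrictMono φ := fun x y hxy => hmono x.2 y.2 hxy
  have hφ_surj : Function.Surjective φ := fun y => by
    obtain ⟨x, hx, hfx⟩ := intermediate_value_Ici hcont htop y.2
    exact ⟨⟨x, hx⟩, Subtype.ext hfx⟩
  let e := hφ_mono.orderIsoOfSurjective φ hφ_surj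
  let clamp : ℝ → Ici (f a) := fun y => ⟨max y (f a), mem_Ici.2 (le_max_right _ _)⟩
  refine ⟨fun y => e.symm (clamp y), ?_, fun y hy => ⟨(e.symm _).2, ?_⟩⟩
  · exact continuous_subtype_val.comp
      (e.symm.continuous.comp ((continuous_id.max continuous_const).subtype_mk _))
  · exact (congrArg Subtype.val (e.apply_symm_apply (clamp y))).trans (max_eq_left hy)

/-- `|z₁ z₂ z₃|²` on the fibre `F⁻¹(c₁, c₂, c₃)`, in terms of `u = |z₃|²`. -/
def fibreCubic (c₁ c₂ u : ℝ) : ℝ := u * (c₁ + u) * (c₂ + u)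

section fibreCubic

variable {c₁ c₂ : ℝ}

theorem continuous_fibreCubic : Continuous (fibreCubic c₁ c₂) := by
  unfold fibreCubic; fun_prop

theorem fibreCubic_zero : fibreCubic c₁ c₂ 0 = 0 := by simp [fibreCubic]

theorem strictMonoOn_fibreCubic (h₁ : 0 ≤ c₁) (h₂ : 0 ≤ c₂) :
    StrictMonoOn (fibreCubic c₁ c₂) (Ici 0) := by
  intro x (hx : 0 ≤ x) y (_ : 0 ≤ y) hxy
  unfold fibreCubic
  gcongr

theorem tendsto_fibreCubic_atTop : Tendsto (fibreCubic c₁ c₂) atTop atTop :=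
  (tendsto_id.atTop_mul_atTop₀ (tendsto_atTop_add_const_left _ _ tendsto_id)).atTop_mul_atTop₀
    (tendsto_atTop_add_const_left _ _ tendsto_id)

theorem add_pos_of_fibreCubic_eq {c₃ t u : ℝ} (h₂ : 0 ≤ c₂) (hu : 0 ≤ u)
    (h : fibreCubic c₁ c₂ u = t ^ 2 + c₃ ^ 2) (h₃ : c₃ ≠ 0 ∨ 0 < c₂) : 0 < c₂ + u := by
  rcases h₃ with h₃ | h₃
  · have hu : u ≠ 0 := by
      rintro rfl
      rw [fibreCubic_zero] at h
      have : 0 < c₃ ^ 2 := by positivity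
      linarith [sq_nonneg t]
    positivity
  · positivity

end fibreCubic

theorem HLfib_eq_iff {z₁ z₂ z₃ : ℂ} {c₁ c₂ c₃ : ℝ} :
    HLfib (z₁, z₂, z₃) = (c₁, c₂, c₃) ↔
      normSq z₁ = c₁ + normSq z₃ ∧ normSq z₂ = c₂ + normSq z₃ ∧ (z₁ * z₂ * z₃).im = c₃ := by
  simp only [HLfib, Prod.mk.injEq]
  constructor <;> rintro ⟨h₁, h₂, h₃⟩ <;> exact ⟨by linarith, by linarith, h₃⟩

theorem fibreCubic_normSq_of_HLfib_eq {z₁ z₂ z₃ : ℂ} {c₁ c₂ c₃ : ℝ}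
    (hz : HLfib (z₁, z₂, z₃) = (c₁, c₂, c₃)) :
    fibreCubic c₁ c₂ (normSq z₃) = (z₁ * z₂ * z₃).re ^ 2 + c₃ ^ 2 := by
  obtain ⟨h₁, h₂, h₃⟩ := HLfib_eq_iff.1 hz
  rw [← h₃, ← normSq_add_mul_I, re_add_im, normSq_mul, normSq_mul, h₁, h₂, fibreCubic]
  ring

theorem normSq_ofReal_mul_exp_mul_I (r θ : ℝ) : normSq (r * exp (θ * I)) = r ^ 2 := by
  rw [normSq_mul, normSq_ofReal, normSq_eq_norm_sq, norm_exp_ofReal_mul_I]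
  ring

noncomputable def fibrePoint (c₁ c₂ c₃ u t α β : ℝ) : ℂ × ℂ × ℂ :=
  (√(c₁ + u) * exp (α * I), √(c₂ + u) * exp (β * I),
    (t + c₃ * I) / (√(c₁ + u) * exp (α * I) * (√(c₂ + u) * exp (β * I))))

section fibrePoint

variable {c₁ c₂ c₃ : ℝ}

theorem HLfib_fibrePoint {u t α β : ℝ} (h₁ : 0 < c₁ + u) (h₂ : 0 < c₂ + u)
    (hu : fibreCubic c₁ c₂ u = t ^ 2 + c₃ ^ 2) :
    HLfib (fibrePoint c₁ c₂ c₃ u t α β) = (c₁, c₂, c₃) := by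
  have hn₁ := normSq_ofReal_mul_exp_mul_I √(c₁ + u) α
  have hn₂ := normSq_ofReal_mul_exp_mul_I √(c₂ + u) β
  rw [Real.sq_sqrt h₁.le] at hn₁
  rw [Real.sq_sqrt h₂.le] at hn₂
  have hz₁₂ : √(c₁ + u) * exp (α * I) * (√(c₂ + u) * exp (β * I)) ≠ 0 := by
    rw [← normSq_pos, normSq_mul, hn₁, hn₂]
    positivity
  have hn₃ : (t ^ 2 + c₃ ^ 2) / ((c₁ + u) * (c₂ + u)) = u := by
    rw [← hu, fibreCubic]
    field_simp
  rw [fibrePoint, HLfib_eq_iff, mul_div_cancel₀ _ hz₁₂, normSq_div, normSq_mul (_ * _), hn₁, hn₂,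
    normSq_add_mul_I, hn₃]
  simp

theorem eq_fibrePoint_of_HLfib_eq {z₁ z₂ z₃ : ℂ} (hz : HLfib (z₁, z₂, z₃) = (c₁, c₂, c₃))
    (hz₁₂ : z₁ * z₂ ≠ 0) :
    (z₁, z₂, z₃) = fibrePoint c₁ c₂ c₃ (normSq z₃) (z₁ * z₂ * z₃).re (arg z₁) (arg z₂) := by
  obtain ⟨h₁, h₂, h₃⟩ := HLfib_eq_iff.1 hz
  have polar (z : ℂ) : √(normSq z) * exp (arg z * I) = z := norm_mul_exp_arg_mul_I z
  rw [fibrePoint, ← h₁, ← h₂, polar, polar, ← h₃, re_add_im, mul_div_cancel_left₀ _ hz₁₂]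

theorem Continuous.fibrePoint {X : Type*} [TopologicalSpace X] {u t α β : X → ℝ}
    (hu : Continuous u) (ht : Continuous t) (hα : Continuous α) (hβ : Continuous β)
    (h₁ : ∀ x, 0 < c₁ + u x) (h₂ : ∀ x, 0 < c₂ + u x) :
    Continuous fun x => fibrePoint c₁ c₂ c₃ (u x) (t x) (α x) (β x) := by
  refine .prodMk (by fun_prop) (.prodMk (by fun_prop) (.div (by fun_prop) (by fun_prop) ?_))
  intro x
  simp [exp_ne_zero, (Real.sqrt_pos.2 (h₁ x)).ne', (Real.sqrt_pos.2 (h₂ x)).ne']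

theorem add_pos_of_rightInverse_fibreCubic {g : ℝ → ℝ} (h₂ : 0 ≤ c₂) (h₃ : c₃ ≠ 0 ∨ 0 < c₂)
    (hg : ∀ y, 0 ≤ y → 0 ≤ g y ∧ fibreCubic c₁ c₂ (g y) = y) (t : ℝ) :
    0 < c₂ + g (t ^ 2 + c₃ ^ 2) :=
  have ⟨hu, hG⟩ := hg (t ^ 2 + c₃ ^ 2) (by positivity)
  add_pos_of_fibreCubic_eq h₂ hu hG h₃

theorem HLfib_preimage_eq_range {g : ℝ → ℝ} (h₁ : c₂ ≤ c₁) (h₂ : 0 ≤ c₂)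
    (h₃ : c₃ ≠ 0 ∨ 0 < c₂) (hg : ∀ y, 0 ≤ y → 0 ≤ g y ∧ fibreCubic c₁ c₂ (g y) = y) :
    HLfib ⁻¹' {(c₁, c₂, c₃)} =
      range fun p : ℝ × ℝ × ℝ => fibrePoint c₁ c₂ c₃ (g (p.1 ^ 2 + c₃ ^ 2)) p.1 p.2.1 p.2.2 := by
  refine Subset.antisymm ?_ ?_
  · rintro ⟨z₁, z₂, z₃⟩ (hz : HLfib _ = _)
    obtain ⟨hn₁, hn₂, -⟩ := HLfib_eq_iff.1 hz
    set t := (z₁ * z₂ * z₃).re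
    have hG := fibreCubic_normSq_of_HLfib_eq hz
    have hc₂ := add_pos_of_fibreCubic_eq h₂ (normSq_nonneg z₃) hG h₃
    have hz₁₂ : z₁ * z₂ ≠ 0 := by
      rw [← normSq_pos, normSq_mul, hn₁, hn₂]
      exact mul_pos (by linarith) hc₂
    obtain ⟨hu, hGu⟩ := hg (t ^ 2 + c₃ ^ 2) (by positivity)
    have hgt : g (t ^ 2 + c₃ ^ 2) = normSq z₃ :=
      (strictMonoOn_fibreCubic (h₂.trans h₁) h₂).injOn hu (normSq_nonneg z₃) (hGu.trans hG.symm)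
    refine ⟨(t, arg z₁, arg z₂), ?_⟩
    simp only [hgt]
    exact (eq_fibrePoint_of_HLfib_eq hz hz₁₂).symm
  · rintro _ ⟨⟨t, α, β⟩, rfl⟩
    have hc₂ := add_pos_of_rightInverse_fibreCubic h₂ h₃ hg t
    exact HLfib_fibrePoint (by linarith) hc₂ (hg _ (by positivity)).2

end fibrePoint

/-- For `c₁ ≥ c₂ ≥ 0` and `c₃` with `c₃ ≠ 0` or `c₂ > 0`, the fibre
`F⁻¹(c₁, c₂, c₃)` is a connected subset of `ℂ³`. -/
theorem fibre_connected (c₁ c₂ c₃ : ℝ) (h₁ : c₂ ≤ c₁) (h₂ : 0 ≤ c₂)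
    (h₃ : c₃ ≠ 0 ∨ 0 < c₂) :
    IsConnected (HLfib ⁻¹' {(c₁, c₂, c₃)}) := by
  obtain ⟨g, hg_cont, hg⟩ := (strictMonoOn_fibreCubic (h₂.trans h₁) h₂)
    |>.exists_continuous_rightInverse_Ici continuous_fibreCubic.continuousOn
      tendsto_fibreCubic_atTop
  simp only [fibreCubic_zero] at hg
  have hc₂ := add_pos_of_rightInverse_fibreCubic h₂ h₃ hg
  rw [HLfib_preimage_eq_range h₁ h₂ h₃ hg]
  exact isConnected_range <| .fibrePoint (by fun_prop) (by fun_prop) (by fun_prop) (by fun_prop)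
    (fun p => by linarith [hc₂ p.1]) (fun p => hc₂ p.1)
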